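/- Let (X,d) be a locally compact, locally connected metric space and E ⊆ X a connected set. Then for every ε > 0, any two points x, y ∈ E can be joined by a path γ in X whose image has diameter at most diam(E) + ε. -/

import Mathlib

/-!
Any two points of a preconnected set are joined by chains of arbitrarily small steps inside it.
On a compact ball `closedBall p (2 * r)` this holds uniformly: there are `η n > 0` such that
points at distance `< η n` are joined by an `η (n + 1)`-chain staying within `r / 2 / 2 ^ n`
of the first point. Starting from the two-point chain `p, q` with times `0, 1` and inserting
such chains between consecutive points, at intermediate times, gives step functions on `[0, 1]`
that move by at most `r / 2 / 2 ^ n` at stage `n` and only jump by less than `η n`; their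
uniform limit is a path from `p` to `q` in `closedBall p (2 * r)`. Chaining such short paths
along the connected set `E` gives a path inside the `ε / 2`-thickening of `E`, whose diameter
is at most `diam E + ε`.
-/

open Set Metric Filter Topology

section Metric

variable {X : Type*} [PseudoMetricSpace X]

theorem IsPreconnected.exists_isChain_dist_lt {C : Set X} (hC : IsPreconnected C) {η : ℝ}
    (hη : 0 < η) {a b : X} (ha : a ∈ C) (hb : b ∈ C) :
    ∃ l : List X, (∀ z ∈ l, z ∈ C) ∧ (a :: l ++ [b]).IsChain (dist · · < η) := by
  refine hC.induction₂' (fun a b => ∃ l : List X, (∀ z ∈ l, z ∈ C) ∧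
      (a :: l ++ [b]).IsChain (dist · · < η)) (fun a _ => ?_) ?_ ha hb
  · filter_upwards [nhdsWithin_le_nhds (ball_mem_nhds a hη)] with b hb
    exact ⟨⟨[], by simp, by simpa [dist_comm] using hb⟩, ⟨[], by simp, by simpa using hb⟩⟩
  · rintro a b c - hb - ⟨l₁, hl₁C, hl₁⟩ ⟨l₂, hl₂C, hl₂⟩
    refine ⟨l₁ ++ b :: l₂, by grind, ?_⟩
    simpa using hl₁.append_overlap (l₁ := a :: l₁) (l₃ := l₂ ++ [c]) hl₂ (by simp)

theorem IsCompact.exists_forall_dist_lt_exists_isChain [LocallyConnectedSpace X] {K : Set X}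
    (hK : IsCompact K) {δ : ℝ} (hδ : 0 < δ) :
    ∃ η > 0, ∀ a ∈ K, ∀ b, dist a b < η → ∀ η' > 0, ∃ l : List X,
      (a :: l ++ [b]).IsChain (dist · · < η') ∧ ∀ z ∈ l, dist a z < δ := by
  obtain ⟨η, hη, hcov⟩ := lebesgue_number_lemma_of_metric hK
    (c := fun z : X => connectedComponentIn (ball z (δ / 2)) z)
    (fun _ => isOpen_ball.connectedComponentIn)
    (fun z _ => mem_iUnion.2 ⟨z, mem_connectedComponentIn (mem_ball_self (half_pos hδ))⟩)
  refine ⟨η, hη, fun a ha b hab η' hη' => ?_⟩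
  obtain ⟨z, hz⟩ := hcov a ha
  obtain ⟨l, hlC, hl⟩ := isPreconnected_connectedComponentIn.exists_isChain_dist_lt hη'
    (hz (mem_ball_self hη)) (hz (mem_ball_comm.1 hab))
  refine ⟨l, hl, fun w hw => ?_⟩
  have hsub := connectedComponentIn_subset (ball z (δ / 2)) z
  have haz := mem_ball.1 (hsub (hz (mem_ball_self hη)))
  have hwz := mem_ball.1 (hsub (hlC w hw))
  calc dist a w ≤ dist a z + dist w z := dist_triangle_right _ _ _
    _ < δ / 2 + δ / 2 := add_lt_add haz hwz
    _ = δ := add_halves δ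

theorem continuous_of_dist_le_of_eventually_dist_le {α : Type*} [TopologicalSpace α]
    {f : ℕ → α → X} {g : α → X} {a : ℕ → ℝ} (ha : Tendsto a atTop (𝓝 0))
    (hfg : ∀ n t, dist (f n t) (g t) ≤ a n) (hf : ∀ n t, ∀ᶠ s in 𝓝 t, dist (f n s) (f n t) ≤ a n) :
    Continuous g := by
  refine continuous_iff_continuousAt.2 fun t => Metric.tendsto_nhds.2 fun ε hε => ?_
  obtain ⟨n, hn⟩ := (ha.eventually (gt_mem_nhds (show (0 : ℝ) < ε / 3 by positivity))).exists
  filter_upwards [hf n t] with s hs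
  calc dist (g s) (g t) ≤ dist (g s) (f n s) + dist (f n s) (f n t) + dist (f n t) (g t) :=
        dist_triangle4 _ _ _ _
    _ ≤ a n + a n + a n := by gcongr; rw [dist_comm]; exact hfg n s; exact hfg n t
    _ < ε := by linarith

theorem exists_continuous_tendsto_of_dist_le_geometric_two {α : Type*} [TopologicalSpace α]
    {K : Set X} (hK : IsComplete K) {f : ℕ → α → X} (hfK : ∀ n t, f n t ∈ K) {C : ℝ}
    (hf : ∀ n t, dist (f n t) (f (n + 1) t) ≤ C / 2 / 2 ^ n)
    (hosc : ∀ n t, ∀ᶠ s in 𝓝 t, dist (f n s) (f n t) ≤ C / 2 ^ n) :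
    ∃ g : α → X, Continuous g ∧ ∀ t, g t ∈ K ∧ Tendsto (f · t) atTop (𝓝 (g t)) := by
  choose g hgK hg using fun t => cauchySeq_tendsto_of_isComplete hK (hfK · t)
    (cauchySeq_of_le_geometric_two (hf · t))
  refine ⟨g, ?_, fun t => ⟨hgK t, hg t⟩⟩
  exact continuous_of_dist_le_of_eventually_dist_le
    (tendsto_const_nhds.div_atTop (tendsto_pow_atTop_atTop_of_one_lt one_lt_two))
    (fun n t => dist_le_of_le_geometric_two_of_tendsto (hf · t) (hg t) n) hosc

end Metric

namespace StepChain

variable {α : Type*}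

/-- For a list sorted by time, the point of the last entry with time `≤ t`, and `z` before the
first time. -/
noncomputable def stepFun (z : α) (L : List (ℝ × α)) (t : ℝ) : α :=
  L.foldl (fun w u => if u.1 ≤ t then u.2 else w) z

@[simp] theorem stepFun_nil (z : α) (t : ℝ) : stepFun z [] t = z := rfl

theorem stepFun_cons (z : α) (u : ℝ × α) (L : List (ℝ × α)) (t : ℝ) :
    stepFun z (u :: L) t = stepFun (if u.1 ≤ t then u.2 else z) L t := rfl

theorem stepFun_append (z : α) (L₁ L₂ : List (ℝ × α)) (t : ℝ) :
    stepFun z (L₁ ++ L₂) t = stepFun (stepFun z L₁ t) L₂ t :=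
  List.foldl_append ..

theorem stepFun_cons_of_le {u : ℝ × α} {t : ℝ} (h : u.1 ≤ t) (z : α) (L : List (ℝ × α)) :
    stepFun z (u :: L) t = stepFun u.2 L t := by
  rw [stepFun_cons, if_pos h]

theorem stepFun_cons_self (u : ℝ × α) (L : List (ℝ × α)) (t : ℝ) :
    stepFun u.2 (u :: L) t = stepFun u.2 L t := by
  rw [stepFun_cons, ite_self]

theorem stepFun_of_lt {L : List (ℝ × α)} {t : ℝ} (h : ∀ u ∈ L, t < u.1) (z : α) :
    stepFun z L t = z := by
  induction L generalizing z with
  | nil => rfl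
  | cons u L ih =>
    rw [stepFun_cons, if_neg (h u List.mem_cons_self).not_ge]
    exact ih (fun w hw => h w (List.mem_cons_of_mem u hw)) z

theorem stepFun_eq_or_mem (z : α) (L : List (ℝ × α)) (t : ℝ) :
    stepFun z L t = z ∨ stepFun z L t ∈ L.map Prod.snd := by
  induction L generalizing z with
  | nil => exact Or.inl rfl
  | cons u L ih =>
    rw [stepFun_cons]
    split_ifs
    · exact Or.inr ((ih u.2).elim (fun h => by simp [h]) (fun h => List.mem_cons_of_mem _ h))
    · exact (ih z).imp_right (List.mem_cons_of_mem _)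

theorem fst_lt_of_isChain_cons {a : ℝ × α} {L : List (ℝ × α)}
    (h : (a :: L).IsChain fun u v => u.1 < v.1) {w : ℝ × α} (hw : w ∈ L) : a.1 < w.1 := by
  have := ((List.isChain_map Prod.fst (R := (· < ·))).2 h).pairwise
  exact List.rel_of_pairwise_cons this (List.mem_map_of_mem hw)

theorem stepFun_of_isChain_of_lt {u : ℝ × α} {L : List (ℝ × α)}
    (h : (u :: L).IsChain fun u v => u.1 < v.1) {t : ℝ} (ht : t < u.1) (z : α) :
    stepFun z (u :: L) t = z := by
  refine stepFun_of_lt (fun w hw => ?_) z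
  rcases List.mem_cons.1 hw with rfl | hw
  exacts [ht, ht.trans (fst_lt_of_isChain_cons h hw)]

theorem eventually_dist_stepFun_lt [PseudoMetricSpace α] {η : ℝ} (hη : 0 < η) {a : ℝ × α}
    {L : List (ℝ × α)} (hsort : (a :: L).IsChain fun u v => u.1 < v.1)
    (hdist : (a :: L).IsChain fun u v => dist u.2 v.2 < η) (t : ℝ) :
    ∀ᶠ s in 𝓝 t, dist (stepFun a.2 (a :: L) s) (stepFun a.2 (a :: L) t) < η := by
  simp only [stepFun_cons_self]
  induction L generalizing a t with
  | nil => simp [hη]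
  | cons u L ih =>
    rw [List.isChain_cons_cons] at hsort hdist
    have hle : ∀ s, u.1 ≤ s → stepFun a.2 (u :: L) s = stepFun u.2 L s :=
      fun s hs => stepFun_cons_of_le hs _ _
    have hlt : ∀ s, s < u.1 → stepFun a.2 (u :: L) s = a.2 :=
      fun s hs => stepFun_of_isChain_of_lt hsort.2 hs _
    rcases lt_trichotomy t u.1 with ht | rfl | ht
    · filter_upwards [Iio_mem_nhds ht] with s hs
      rwa [hlt s hs, hlt t ht, dist_self]
    · filter_upwards [ih hsort.2 hdist.2 u.1] with s hs
      rw [hle _ le_rfl]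
      rcases le_or_gt u.1 s with hus | hsu
      · rwa [hle s hus]
      · rw [hlt s hsu, stepFun_of_lt (fun w hw => fst_lt_of_isChain_cons hsort.2 hw)]
        exact hdist.1
    · filter_upwards [Ioi_mem_nhds ht, ih hsort.2 hdist.2 t] with s hs hs'
      rwa [hle s hs.le, hle t ht.le]

noncomputable def stamp (t t' : ℝ) : List α → List (ℝ × α)
  | [] => []
  | z :: zs => ((t + t') / 2, z) :: stamp ((t + t') / 2) t' zs

@[simp] theorem map_snd_stamp (t t' : ℝ) (zs : List α) : (stamp t t' zs).map Prod.snd = zs := by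
  induction zs generalizing t with
  | nil => rfl
  | cons z zs ih => simp [stamp, ih]

theorem isChain_cons_stamp_append {a b : ℝ × α} (h : a.1 < b.1) (zs : List α) :
    (a :: stamp a.1 b.1 zs ++ [b]).IsChain fun u v => u.1 < v.1 := by
  induction zs generalizing a with
  | nil => simpa [stamp] using h
  | cons z zs ih =>
    have hm : (a.1 + b.1) / 2 < b.1 := by linarith
    exact List.isChain_cons_cons.2 ⟨by simp only; linarith, ih (a := ((a.1 + b.1) / 2, z)) hm⟩

/-- `a :: refineFrom bridge a L` is `a :: L` with the points of `bridge u.2 v.2` inserted between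
any two consecutive entries `u, v`, at times strictly between theirs. -/
noncomputable def refineFrom (bridge : α → α → List α) : ℝ × α → List (ℝ × α) → List (ℝ × α)
  | _, [] => []
  | a, b :: L => stamp a.1 b.1 (bridge a.2 b.2) ++ b :: refineFrom bridge b L

variable {bridge : α → α → List α}

theorem getLast?_refineFrom (a : ℝ × α) (L : List (ℝ × α)) :
    (refineFrom bridge a L).getLast? = L.getLast? := by
  induction L generalizing a with
  | nil => rfl
  | cons b L ih => simp [refineFrom, List.getLast?_append, List.getLast?_cons, ih]

theorem mem_refineFrom {a w : ℝ × α} {L : List (ℝ × α)} (hw : w ∈ refineFrom bridge a L) :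
    w ∈ L ∨ ∃ u v, [u, v] <:+: a :: L ∧ w.2 ∈ bridge u.2 v.2 := by
  induction L generalizing a with
  | nil => simp [refineFrom] at hw
  | cons b L ih =>
    rcases List.mem_append.1 hw with hw | hw
    · exact Or.inr ⟨a, b, ⟨[], L, rfl⟩,
        by simpa using List.mem_map_of_mem (f := Prod.snd) hw⟩
    rcases List.mem_cons.1 hw with rfl | hw
    · exact Or.inl List.mem_cons_self
    rcases ih hw with hw | ⟨u, v, huv, hw⟩
    · exact Or.inl (List.mem_cons_of_mem _ hw)
    · exact Or.inr ⟨u, v, List.infix_cons huv, hw⟩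

theorem isChain_cons_refineFrom {Q : ℝ × α → ℝ × α → Prop} {a : ℝ × α} {L : List (ℝ × α)}
    (h : ∀ u v, [u, v] <:+: a :: L → (u :: stamp u.1 v.1 (bridge u.2 v.2) ++ [v]).IsChain Q) :
    (a :: refineFrom bridge a L).IsChain Q := by
  induction L generalizing a with
  | nil => exact List.isChain_singleton a
  | cons b L ih =>
    have hab := h a b ⟨[], L, rfl⟩
    have hbL := ih fun u v huv => h u v (List.infix_cons huv)
    rw [refineFrom]
    simpa using hab.append_overlap (l₁ := a :: _) (l₃ := refineFrom bridge b L) hbL (by simp)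


theorem dist_stepFun_refineFrom_le [PseudoMetricSpace α] {δ : ℝ} (hδ : 0 ≤ δ) {a : ℝ × α}
    {L : List (ℝ × α)} (hsort : (a :: L).IsChain fun u v => u.1 < v.1)
    (hsort' : (a :: refineFrom bridge a L).IsChain fun u v => u.1 < v.1)
    (hbridge : ∀ u v, [u, v] <:+: a :: L → ∀ z ∈ bridge u.2 v.2, dist u.2 z ≤ δ) (z : α) (t : ℝ) :
    dist (stepFun z (a :: L) t) (stepFun z (a :: refineFrom bridge a L) t) ≤ δ := by
  induction L generalizing a z with
  | nil => simpa [refineFrom] using hδ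
  | cons b L ih =>
    have hsortb := (List.isChain_cons_cons.1 hsort).2
    have hsortb' : (b :: refineFrom bridge b L).IsChain fun u v => u.1 < v.1 :=
      hsort'.right_of_append (l₁ := a :: stamp a.1 b.1 (bridge a.2 b.2))
    rw [stepFun_cons z a, refineFrom, stepFun_cons z a, stepFun_append]
    -- From time `b.1` on both lists continue from `b`; before it the old value is `a.2` (or `z`)
    -- and the new one is `a.2` or a bridge point (or `z`).
    rcases le_or_gt b.1 t with hbt | htb
    · rw [stepFun_cons_of_le hbt, ← stepFun_cons_of_le hbt (stepFun _ _ t)]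
      exact ih hsortb hsortb' (fun u v huv => hbridge u v (List.infix_cons huv)) _
    rw [stepFun_of_isChain_of_lt hsortb htb, stepFun_of_isChain_of_lt hsortb' htb]
    rcases le_or_gt a.1 t with hat | hta
    · rw [if_pos hat]
      rcases stepFun_eq_or_mem a.2 (stamp a.1 b.1 (bridge a.2 b.2)) t with h | h
      · simpa [h] using hδ
      · exact hbridge a b ⟨[], L, rfl⟩ _ (by simpa using h)
    · have hzs : ∀ w ∈ stamp a.1 b.1 (bridge a.2 b.2), t < w.1 := fun w hw =>
        hta.trans (fst_lt_of_isChain_cons hsort' (List.mem_append_left _ hw))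
      rwa [if_neg hta.not_ge, stepFun_of_lt hzs, dist_self]

structure IsFineChain [PseudoMetricSpace α] (p q : α) (ρ η : ℝ) (L : List (ℝ × α)) : Prop where
  sorted : ((0, p) :: L).IsChain fun u v => u.1 < v.1
  dist_lt : ((0, p) :: L).IsChain fun u v => dist u.2 v.2 < η
  dist_le : ∀ w ∈ (0, p) :: L, dist p w.2 ≤ ρ
  getLast?_eq : L.getLast? = some (1, q)

def IsBridge [PseudoMetricSpace α] (bridge : α → α → List α) (p : α) (ρ η η' δ : ℝ) : Prop :=
  ∀ a b, dist p a ≤ ρ → dist a b < η →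
    (a :: bridge a b ++ [b]).IsChain (dist · · < η') ∧ ∀ z ∈ bridge a b, dist a z ≤ δ

namespace IsFineChain

variable [PseudoMetricSpace α] {p q : α} {ρ η : ℝ} {L : List (ℝ × α)}

theorem rel_of_infix (hL : IsFineChain p q ρ η L) {u v : ℝ × α} (huv : [u, v] <:+: (0, p) :: L) :
    u.1 < v.1 ∧ dist u.2 v.2 < η ∧ dist p u.2 ≤ ρ :=
  ⟨List.isChain_pair (R := fun u v : ℝ × α => u.1 < v.1) |>.1 (hL.sorted.infix huv),
    List.isChain_pair (R := fun u v : ℝ × α => dist u.2 v.2 < η) |>.1 (hL.dist_lt.infix huv),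
    hL.dist_le u (huv.subset (by simp))⟩

theorem refine (hL : IsFineChain p q ρ η L) {δ η' : ℝ} (hδ : 0 ≤ δ)
    (hbridge : IsBridge bridge p ρ η η' δ) :
    IsFineChain p q (ρ + δ) η' (refineFrom bridge (0, p) L) := by
  refine ⟨isChain_cons_refineFrom fun u v huv =>
      isChain_cons_stamp_append (hL.rel_of_infix huv).1 _, isChain_cons_refineFrom fun u v huv => ?_, fun w hw => ?_, ?_⟩
  · obtain ⟨-, huv, hpu⟩ := hL.rel_of_infix huv
    exact (List.isChain_map Prod.snd (R := fun x y : α => dist x y < η')).1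
      (by simpa using (hbridge u.2 v.2 hpu huv).1)
  · rcases List.mem_cons.1 hw with rfl | hw
    · exact (hL.dist_le _ List.mem_cons_self).trans (le_add_of_nonneg_right hδ)
    rcases mem_refineFrom hw with hw | ⟨u, v, huv, hw⟩
    · exact (hL.dist_le w (List.mem_cons_of_mem _ hw)).trans (le_add_of_nonneg_right hδ)
    · obtain ⟨-, huv, hpu⟩ := hL.rel_of_infix huv
      calc dist p w.2 ≤ dist p u.2 + dist u.2 w.2 := dist_triangle _ _ _
        _ ≤ ρ + δ := add_le_add hpu ((hbridge u.2 v.2 hpu huv).2 _ hw)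
  · rw [getLast?_refineFrom, hL.getLast?_eq]

theorem dist_stepFun_refine_le (hL : IsFineChain p q ρ η L) {δ η' : ℝ} (hδ : 0 ≤ δ)
    (hbridge : IsBridge bridge p ρ η η' δ) (t : ℝ) :
    dist (stepFun p ((0, p) :: L) t) (stepFun p ((0, p) :: refineFrom bridge (0, p) L) t) ≤ δ :=
  dist_stepFun_refineFrom_le hδ hL.sorted (hL.refine hδ hbridge).sorted
    (fun _ _ huv _ hz => (hbridge _ _ (hL.rel_of_infix huv).2.2 (hL.rel_of_infix huv).2.1).2 _ hz)
    p t

theorem stepFun_zero (hL : IsFineChain p q ρ η L) : stepFun p ((0, p) :: L) 0 = p := by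
  rw [stepFun_cons_of_le (u := (0, p)) le_rfl]
  exact stepFun_of_lt (fun w hw => fst_lt_of_isChain_cons hL.sorted hw) p

theorem stepFun_one (hL : IsFineChain p q ρ η L) : stepFun p ((0, p) :: L) 1 = q := by
  rw [← List.dropLast_append_getLast? _ hL.getLast?_eq, ← List.cons_append, stepFun_append]
  simp [stepFun_cons]

theorem stepFun_mem_closedBall (hL : IsFineChain p q ρ η L) (t : ℝ) :
    stepFun p ((0, p) :: L) t ∈ closedBall p ρ := by
  rcases stepFun_eq_or_mem p ((0, p) :: L) t with h | h
  · simpa [h] using hL.dist_le _ List.mem_cons_self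
  · obtain ⟨w, hw, hwt⟩ := List.mem_map.1 h
    exact mem_closedBall'.2 (hwt ▸ hL.dist_le w hw)

theorem eventually_dist_stepFun_lt (hL : IsFineChain p q ρ η L) (hη : 0 < η) (t : ℝ) :
    ∀ᶠ s in 𝓝 t, dist (stepFun p ((0, p) :: L) s) (stepFun p ((0, p) :: L) t) < η :=
  StepChain.eventually_dist_stepFun_lt hη hL.sorted hL.dist_lt t

end IsFineChain

noncomputable def refineSeq (p q : α) (bridge : ℕ → α → α → List α) : ℕ → List (ℝ × α)
  | 0 => [(1, q)]
  | n + 1 => refineFrom (bridge n) (0, p) (refineSeq p q bridge n)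

theorem isFineChain_refineSeq [PseudoMetricSpace α] {p q : α} {r : ℝ} {η : ℕ → ℝ}
    (hηr : ∀ n, η n ≤ r / 2 ^ n) {bridge : ℕ → α → α → List α}
    (hbridge : ∀ n, IsBridge (bridge n) p (2 * r) (η n) (η (n + 1)) (r / 2 / 2 ^ n))
    (hpq : dist p q < η 0) (n : ℕ) :
    IsFineChain p q (2 * r - r / 2 ^ n) (η n) (refineSeq p q bridge n) := by
  have hpq' : dist p q ≤ r := by simpa using hpq.le.trans (hηr 0)
  have hr : 0 ≤ r := dist_nonneg.trans hpq'
  induction n with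
  | zero =>
    refine ⟨by simp [refineSeq], by simpa [refineSeq] using hpq, ?_, rfl⟩
    simpa [refineSeq, two_mul] using ⟨hr, hpq'⟩
  | succ n ih =>
    have hρ : 2 * r - r / 2 ^ n + r / 2 / 2 ^ n = 2 * r - r / 2 ^ (n + 1) := by
      rw [pow_succ]; ring
    exact hρ ▸ ih.refine (by positivity)
      fun a b ha hab => hbridge n a b (ha.trans (sub_le_self _ (by positivity))) hab

theorem exists_path_mem_closedBall {X : Type*} [MetricSpace X] {p q : X} {r : ℝ}
    (hK : IsComplete (closedBall p (2 * r))) {η : ℕ → ℝ} (hη : ∀ n, 0 < η n)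
    (hηr : ∀ n, η n ≤ r / 2 ^ n) {bridge : ℕ → X → X → List X}
    (hbridge : ∀ n, IsBridge (bridge n) p (2 * r) (η n) (η (n + 1)) (r / 2 / 2 ^ n))
    (hpq : dist p q < η 0) :
    ∃ γ : Path p q, ∀ t, γ t ∈ closedBall p (2 * r) := by
  have hfine := isFineChain_refineSeq hηr hbridge hpq
  have hr : 0 ≤ r := (hη 0).le.trans (by simpa using hηr 0)
  have hρ : ∀ n : ℕ, 2 * r - r / 2 ^ n ≤ 2 * r := fun n => sub_le_self _ (by positivity)
  obtain ⟨g, hg, hgf⟩ := exists_continuous_tendsto_of_dist_le_geometric_two hK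
    (f := fun n t => stepFun p ((0, p) :: refineSeq p q bridge n) t) (C := r)
    (fun n t => closedBall_subset_closedBall (hρ n) ((hfine n).stepFun_mem_closedBall t))
    (fun n t => (hfine n).dist_stepFun_refine_le (by positivity)
      (fun a b ha hab => hbridge n a b (ha.trans (hρ n)) hab) t)
    (fun n t => ((hfine n).eventually_dist_stepFun_lt (hη n) t).mono
      fun s hs => hs.le.trans (hηr n))
  have hg0 : g 0 = p := tendsto_nhds_unique (hgf 0).2 (by simp [(hfine _).stepFun_zero])
  have hg1 : g 1 = q := tendsto_nhds_unique (hgf 1).2 (by simp [(hfine _).stepFun_one])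
  exact ⟨⟨⟨fun t => g t, hg.comp continuous_subtype_val⟩, hg0, hg1⟩, fun t => (hgf t).1⟩

end StepChain

theorem eventually_exists_path_mem_closedBall {X : Type*} [MetricSpace X] [LocallyCompactSpace X]
    [LocallyConnectedSpace X] (p : X) {ε : ℝ} (hε : 0 < ε) :
    ∀ᶠ q in 𝓝 p, ∃ γ : Path p q, ∀ t, γ t ∈ closedBall p ε := by
  obtain ⟨R, hR, hRc⟩ := exists_isCompact_closedBall p
  set r := min R ε / 2
  have hr : 0 < r := by positivity
  have h2r : 2 * r = min R ε := by ring
  have hK : IsCompact (closedBall p (2 * r)) :=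
    hRc.of_isClosed_subset isClosed_closedBall (closedBall_subset_closedBall (by simp [h2r]))
  choose η₀ hη₀ hchain using fun n : ℕ =>
    hK.exists_forall_dist_lt_exists_isChain (δ := r / 2 / 2 ^ n) (by positivity)
  set η : ℕ → ℝ := fun n => min (η₀ n) (r / 2 ^ n)
  have hη : ∀ n, 0 < η n := fun n => lt_min (hη₀ n) (by positivity)
  have hbridge : ∀ n a b, ∃ l : List X, dist p a ≤ 2 * r → dist a b < η n →
      (a :: l ++ [b]).IsChain (dist · · < η (n + 1)) ∧ ∀ z ∈ l, dist a z ≤ r / 2 / 2 ^ n := by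
    intro n a b
    by_cases h : dist p a ≤ 2 * r ∧ dist a b < η n
    · obtain ⟨l, hl, hla⟩ := hchain n a (mem_closedBall'.2 h.1) b
        (h.2.trans_le (min_le_left _ _)) (η (n + 1)) (hη (n + 1))
      exact ⟨l, fun _ _ => ⟨hl, fun z hz => (hla z hz).le⟩⟩
    · exact ⟨[], fun ha hab => (h ⟨ha, hab⟩).elim⟩
  choose bridge hbridge using hbridge
  filter_upwards [ball_mem_nhds p (hη 0)] with q hq
  obtain ⟨γ, hγ⟩ := StepChain.exists_path_mem_closedBall hK.isComplete hη
    (fun n => min_le_right _ _) hbridge (mem_ball'.1 hq)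
  exact ⟨γ, fun t => closedBall_subset_closedBall (by simp [h2r]) (hγ t)⟩

theorem IsPreconnected.exists_path_range_subset_cthickening {X : Type*} [MetricSpace X]
    [LocallyCompactSpace X] [LocallyConnectedSpace X] {E : Set X} (hE : IsPreconnected E)
    {δ : ℝ} (hδ : 0 < δ) {x y : X} (hx : x ∈ E) (hy : y ∈ E) :
    ∃ γ : Path x y, range γ ⊆ cthickening δ E := by
  refine hE.induction₂' (fun a b => ∃ γ : Path a b, range γ ⊆ cthickening δ E)
    (fun a ha => ?_) (fun a b c _ _ _ ⟨γ₁, h₁⟩ ⟨γ₂, h₂⟩ =>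
      ⟨γ₁.trans γ₂, (Path.trans_range γ₁ γ₂).trans_subset (union_subset h₁ h₂)⟩) hx hy
  filter_upwards [nhdsWithin_le_nhds (eventually_exists_path_mem_closedBall a hδ)]
    with b ⟨γ, hγ⟩
  have hsub : range γ ⊆ cthickening δ E :=
    range_subset_iff.2 fun t => closedBall_subset_cthickening ha _ (hγ t)
  exact ⟨⟨γ, hsub⟩, ⟨γ.symm, γ.symm_range ▸ hsub⟩⟩

theorem statement_0 {X : Type*} [MetricSpace X] [LocallyCompactSpace X] [LocallyConnectedSpace X]
    (E : Set X) (hE : IsConnected E) {x y : X} (hx : x ∈ E) (hy : y ∈ E)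
    {ε : ℝ} (hε : 0 < ε) :
    ∃ γ : Path x y, EMetric.diam (Set.range fun t => γ t) ≤ EMetric.diam E + ENNReal.ofReal ε := by
  have hε2 : 0 < ε / 2 := half_pos hε
  obtain ⟨γ, hγ⟩ := hE.isPreconnected.exists_path_range_subset_cthickening hε2 hx hy
  refine ⟨γ, (ediam_mono hγ).trans ?_⟩
  calc ediam (cthickening (ε / 2) E) ≤ ediam E + 2 * ENNReal.ofReal (ε / 2) := by
        have := ediam_cthickening_le (s := E) (ε / 2).toNNReal
        rwa [Real.coe_toNNReal _ hε2.le] at this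
    _ = ediam E + ENNReal.ofReal ε := by
        rw [two_mul, ← ENNReal.ofReal_add hε2.le hε2.le, add_halves]
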